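/- arXiv:0902.1502 — 5 statements merged into one kernel-verified Lean document; each statement's English description precedes it below -/
import Mathlib

section
/- Let Ω be a 2n×2n real antisymmetric invertible matrix and V a 2n×2n real symmetric matrix. If the complex Hermitian matrix V + iΩ is positive semidefinite, then V is positive definite. -/
open Matrix
open scoped ComplexOrder

noncomputable def cplx {ι : Type*} (M : Matrix ι ι ℝ) : Matrix ι ι ℂ :=
  M.map Complex.ofReal

/-! For real `x`, the form `x* (V + iΩ) x` equals `xᵀVx + i xᵀΩx`; since it is a nonnegative
complex number, `xᵀVx ≥ 0`. If `xᵀVx = 0`, the whole form vanishes at `x`, so `x` lies in the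
kernel of the positive semidefinite matrix `V + iΩ`, and the imaginary part of `(V + iΩ)x = 0`
is `Ωx = 0`, which forces `x = 0` because `Ω` is invertible. -/

section

variable {ι : Type*} [Fintype ι]

lemma cplx_mulVec_ofReal (M : Matrix ι ι ℝ) (x : ι → ℝ) :
    cplx M *ᵥ (Complex.ofReal ∘ x) = Complex.ofReal ∘ (M *ᵥ x) :=
  funext fun i => (Complex.ofRealHom.map_mulVec M x i).symm

lemma cplx_add_I_smul_cplx_mulVec_ofReal (V Ω : Matrix ι ι ℝ) (x : ι → ℝ) :
    (cplx V + Complex.I • cplx Ω) *ᵥ (Complex.ofReal ∘ x) =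
      fun i => (V *ᵥ x) i + (Ω *ᵥ x) i * Complex.I := by
  ext i
  simp [add_mulVec, smul_mulVec, cplx_mulVec_ofReal, mul_comm]

lemma star_ofReal_dotProduct_cplx_add_I_smul_cplx_mulVec_ofReal (V Ω : Matrix ι ι ℝ)
    (x : ι → ℝ) :
    star (Complex.ofReal ∘ x) ⬝ᵥ (cplx V + Complex.I • cplx Ω) *ᵥ (Complex.ofReal ∘ x) =
      (x ⬝ᵥ V *ᵥ x : ℝ) + (x ⬝ᵥ Ω *ᵥ x : ℝ) * Complex.I := by
  rw [cplx_add_I_smul_cplx_mulVec_ofReal]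
  simp [dotProduct, mul_add, Finset.sum_add_distrib, Finset.sum_mul, mul_assoc]

theorem posDef_of_posSemidef_cplx_add_I_smul_cplx [DecidableEq ι] {V Ω : Matrix ι ι ℝ}
    (hV : V.IsHermitian) (hΩ : Ω.det ≠ 0) (h : (cplx V + Complex.I • cplx Ω).PosSemidef) :
    V.PosDef := by
  refine .of_dotProduct_mulVec_pos hV fun x hx => ?_
  have hform := h.dotProduct_mulVec_nonneg (Complex.ofReal ∘ x)
  rw [star_ofReal_dotProduct_cplx_add_I_smul_cplx_mulVec_ofReal] at hform
  obtain ⟨hVx, hΩx⟩ : 0 ≤ x ⬝ᵥ V *ᵥ x ∧ 0 = x ⬝ᵥ Ω *ᵥ x := by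
    simpa [Complex.nonneg_iff] using hform
  rw [star_trivial]
  refine hVx.lt_of_ne fun hVx₀ => hx (eq_zero_of_mulVec_eq_zero hΩ ?_)
  have hker := (h.dotProduct_mulVec_zero_iff _).1 <| by
    rw [star_ofReal_dotProduct_cplx_add_I_smul_cplx_mulVec_ofReal, ← hVx₀, ← hΩx]
    simp
  rw [cplx_add_I_smul_cplx_mulVec_ofReal] at hker
  exact funext fun i => by simpa using congr_arg Complex.im (congr_fun hker i)

end

theorem posdef_of_uncertainty_general (n : ℕ) (Ω V : Matrix (Fin (2 * n)) (Fin (2 * n)) ℝ)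
    (hΩinv : IsUnit Ω.det) (hVsymm : Vᵀ = V)
    (h : (cplx V + Complex.I • cplx Ω).PosSemidef) : V.PosDef :=
  posDef_of_posSemidef_cplx_add_I_smul_cplx
    (by rwa [IsHermitian, conjTranspose_eq_transpose_of_trivial]) hΩinv.ne_zero h

/-- If Ω is a real antisymmetric invertible matrix and V a real symmetric matrix such
that the Hermitian matrix V + iΩ is positive semidefinite, then V is positive definite. -/
theorem posdef_of_uncertainty (n : ℕ) (Ω V : Matrix (Fin (2 * n)) (Fin (2 * n)) ℝ)
    (hΩanti : Ωᵀ = -Ω) (hΩinv : IsUnit Ω.det) (hVsymm : Vᵀ = V)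
    (h : (cplx V + Complex.I • cplx Ω).PosSemidef) : V.PosDef :=
  posdef_of_uncertainty_general n Ω V hΩinv hVsymm h
end

section
/- Let u₀ ∈ ℝ^{2n} be nonzero and suppose u₀^T V u₀ = 0 for a real symmetric matrix V with V + iΩ ≥ 0 (Ω the standard symplectic form). Then for any u₁ ∈ ℝ^{2n}, evaluating z = u₀ + i a u₁ gives z*(V+iΩ)z = 2a u₁^T Ω u₀ + a² u₁^T V u₁ for all a ∈ ℝ; in particular if u₁^T Ω u₀ ≠ 0 one can choose a ∈ ℝ making this expression negative, a contradiction. -/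
/-!
With `V` symmetric and `Ω` antisymmetric, `z*(V + iΩ)z` at `z = u₀ + i a u₁` is the real number
`u₀ᵀVu₀ + 2a u₁ᵀΩu₀ + a² u₁ᵀVu₁`. When `u₀ᵀVu₀ = 0` this quadratic in `a` has no constant term,
so positivity for every `a` forces its linear coefficient `u₁ᵀΩu₀` to vanish.
-/

open Matrix
open scoped ComplexOrder

def omega2 : Matrix (Fin 2) (Fin 2) ℝ := !![0, 1; -1, 0]

/-- The standard symplectic form Ω = ⊕ₖ ω on 2n dimensions, indexed by `Fin n × Fin 2`. -/
def OmegaStd (n : ℕ) : Matrix (Fin n × Fin 2) (Fin n × Fin 2) ℝ :=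
  Matrix.of fun p q => if p.1 = q.1 then omega2 p.2 q.2 else 0

theorem OmegaStd_transpose (n : ℕ) : (OmegaStd n)ᵀ = -OmegaStd n := by
  ext ⟨p₁, p₂⟩ ⟨q₁, q₂⟩
  by_cases h : p₁ = q₁
  · subst h
    fin_cases p₂ <;> fin_cases q₂ <;> simp [OmegaStd, omega2]
  · simp [OmegaStd, h, Ne.symm h]

section QuadraticForm

variable {ι : Type*} [Fintype ι]

theorem ofReal_dotProduct_cplx_mulVec (A : Matrix ι ι ℝ) (x y : ι → ℝ) :
    (fun i => (x i : ℂ)) ⬝ᵥ (cplx A *ᵥ fun i => (y i : ℂ)) = ((x ⬝ᵥ A *ᵥ y : ℝ) : ℂ) := by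
  simp [cplx, dotProduct, mulVec, Finset.mul_sum]

theorem ofReal_dotProduct_cplx_add_I_smul_mulVec (A B : Matrix ι ι ℝ) (x y : ι → ℝ) :
    (fun i => (x i : ℂ)) ⬝ᵥ ((cplx A + Complex.I • cplx B) *ᵥ fun i => (y i : ℂ))
      = ((x ⬝ᵥ A *ᵥ y : ℝ) : ℂ) + Complex.I * ((x ⬝ᵥ B *ᵥ y : ℝ) : ℂ) := by
  rw [add_mulVec, smul_mulVec, dotProduct_add, dotProduct_smul,
    ofReal_dotProduct_cplx_mulVec, ofReal_dotProduct_cplx_mulVec, smul_eq_mul]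

theorem dotProduct_mulVec_comm_of_transpose_eq {A : Matrix ι ι ℝ} (hA : Aᵀ = A) (x y : ι → ℝ) :
    x ⬝ᵥ A *ᵥ y = y ⬝ᵥ A *ᵥ x := by
  rw [dotProduct_mulVec, dotProduct_comm, ← mulVec_transpose, hA]

theorem dotProduct_mulVec_anticomm_of_transpose_eq_neg {A : Matrix ι ι ℝ} (hA : Aᵀ = -A)
    (x y : ι → ℝ) : x ⬝ᵥ A *ᵥ y = -(y ⬝ᵥ A *ᵥ x) := by
  rw [dotProduct_mulVec, dotProduct_comm, ← mulVec_transpose, hA, neg_mulVec, dotProduct_neg]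

theorem dotProduct_mulVec_self_eq_zero_of_transpose_eq_neg {A : Matrix ι ι ℝ} (hA : Aᵀ = -A)
    (x : ι → ℝ) : x ⬝ᵥ A *ᵥ x = 0 := by
  linarith [dotProduct_mulVec_anticomm_of_transpose_eq_neg hA x x]

theorem star_dotProduct_cplx_add_I_smul_mulVec {V Ω : Matrix ι ι ℝ} (hV : Vᵀ = V)
    (hΩ : Ωᵀ = -Ω) (x y : ι → ℝ) (a : ℝ) :
    star (fun i => (x i : ℂ) + Complex.I * a * y i) ⬝ᵥ
        ((cplx V + Complex.I • cplx Ω) *ᵥ fun i => (x i : ℂ) + Complex.I * a * y i)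
      = ((x ⬝ᵥ V *ᵥ x + 2 * a * (y ⬝ᵥ Ω *ᵥ x) + a ^ 2 * (y ⬝ᵥ V *ᵥ y) : ℝ) : ℂ) := by
  set X : ι → ℂ := fun i => (x i : ℂ)
  set Y : ι → ℂ := fun i => (y i : ℂ)
  have hz : (fun i => (x i : ℂ) + Complex.I * a * y i) = X + (Complex.I * a) • Y := by
    funext i; simp [X, Y]
  have hz_star : star (fun i => (x i : ℂ) + Complex.I * a * y i) = X - (Complex.I * a) • Y := by
    funext i; simp [X, Y, sub_eq_add_neg]
  rw [hz_star, hz, mulVec_add, mulVec_smul, dotProduct_add, dotProduct_smul, sub_dotProduct,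
    sub_dotProduct, smul_dotProduct, smul_dotProduct, smul_eq_mul, smul_eq_mul,
    ofReal_dotProduct_cplx_add_I_smul_mulVec, ofReal_dotProduct_cplx_add_I_smul_mulVec,
    ofReal_dotProduct_cplx_add_I_smul_mulVec, ofReal_dotProduct_cplx_add_I_smul_mulVec,
    dotProduct_mulVec_comm_of_transpose_eq hV x y,
    dotProduct_mulVec_anticomm_of_transpose_eq_neg hΩ x y,
    dotProduct_mulVec_self_eq_zero_of_transpose_eq_neg hΩ x,
    dotProduct_mulVec_self_eq_zero_of_transpose_eq_neg hΩ y]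
  push_cast
  linear_combination (-2 * a * ((y ⬝ᵥ Ω *ᵥ x : ℝ) : ℂ) - a ^ 2 * ((y ⬝ᵥ V *ᵥ y : ℝ) : ℂ))
    * Complex.I_sq

end QuadraticForm

theorem eq_zero_of_forall_nonneg_two_mul_add_sq_mul {c d : ℝ}
    (h : ∀ a : ℝ, 0 ≤ 2 * a * c + a ^ 2 * d) : c = 0 := by
  have hdiscrim := discrim_le_zero (a := d) (b := 2 * c) (c := 0) fun a => by
    linarith [h a]
  rw [discrim] at hdiscrim
  nlinarith [sq_nonneg c]

theorem key_computation_general (n : ℕ) (V : Matrix (Fin n × Fin 2) (Fin n × Fin 2) ℝ)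
    (hVsymm : Vᵀ = V) (h : (cplx V + Complex.I • cplx (OmegaStd n)).PosSemidef)
    (u₀ : (Fin n × Fin 2) → ℝ) (hVu₀ : u₀ ⬝ᵥ (V *ᵥ u₀) = 0) :
    (∀ (u₁ : (Fin n × Fin 2) → ℝ) (a : ℝ),
      (star (fun i => (u₀ i : ℂ) + Complex.I * a * u₁ i)) ⬝ᵥ
        ((cplx V + Complex.I • cplx (OmegaStd n)) *ᵥ
          (fun i => (u₀ i : ℂ) + Complex.I * a * u₁ i))
      = ((2 * a * (u₁ ⬝ᵥ (OmegaStd n *ᵥ u₀)) + a ^ 2 * (u₁ ⬝ᵥ (V *ᵥ u₁)) : ℝ) : ℂ)) ∧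
    (∀ u₁ : (Fin n × Fin 2) → ℝ, u₁ ⬝ᵥ (OmegaStd n *ᵥ u₀) ≠ 0 → False) := by
  have quadratic_form := fun u₁ a =>
    star_dotProduct_cplx_add_I_smul_mulVec hVsymm (OmegaStd_transpose n) u₀ u₁ a
  simp only [hVu₀, zero_add] at quadratic_form
  refine ⟨quadratic_form, fun u₁ hΩ => hΩ ?_⟩
  refine eq_zero_of_forall_nonneg_two_mul_add_sq_mul (d := u₁ ⬝ᵥ V *ᵥ u₁) fun a => ?_
  have hnonneg := h.dotProduct_mulVec_nonneg (fun i => (u₀ i : ℂ) + Complex.I * a * u₁ i)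
  rwa [quadratic_form, Complex.zero_le_real] at hnonneg

/-- Key computation in the proof that V + iΩ ≥ 0 implies V > 0: for z = u₀ + i a u₁ one has
z*(V+iΩ)z = 2a u₁ᵀΩu₀ + a² u₁ᵀVu₁; in particular if u₁ᵀΩu₀ ≠ 0 a contradiction arises. -/
theorem key_computation (n : ℕ) (V : Matrix (Fin n × Fin 2) (Fin n × Fin 2) ℝ)
    (hVsymm : Vᵀ = V) (h : (cplx V + Complex.I • cplx (OmegaStd n)).PosSemidef)
    (u₀ : (Fin n × Fin 2) → ℝ) (hu₀ : u₀ ≠ 0) (hVu₀ : u₀ ⬝ᵥ (V *ᵥ u₀) = 0) :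
    (∀ (u₁ : (Fin n × Fin 2) → ℝ) (a : ℝ),
      (star (fun i => (u₀ i : ℂ) + Complex.I * a * u₁ i)) ⬝ᵥ
        ((cplx V + Complex.I • cplx (OmegaStd n)) *ᵥ
          (fun i => (u₀ i : ℂ) + Complex.I * a * u₁ i))
      = ((2 * a * (u₁ ⬝ᵥ (OmegaStd n *ᵥ u₀)) + a ^ 2 * (u₁ ⬝ᵥ (V *ᵥ u₁)) : ℝ) : ℂ)) ∧
    (∀ u₁ : (Fin n × Fin 2) → ℝ, u₁ ⬝ᵥ (OmegaStd n *ᵥ u₀) ≠ 0 → False) :=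
  key_computation_general n V hVsymm h u₀ hVu₀
end

section
/- Let V = [[A,C],[C^T,B]] be a 4×4 real symmetric matrix with A, B ∈ S(2,ℝ) positive definite and C ∈ M₂(ℝ). Then there exists a matrix S = S_A ⊕ S_B with S_A, S_B ∈ SL(2,ℝ) such that SVS^T = [[aI₂, C'],[C'^T, bI₂]] with C' = diag(c₊, c₋) diagonal, where a² = det A, b² = det B, and c₊c₋ = det C. -/
/-!
A congruence by a lower-triangular matrix of determinant one turns each positive definite
diagonal block into `√det • 1`. Rotations preserve such scalar blocks, and a pair of rotations
acting on the two sides of the off-diagonal block diagonalises it (real singular value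
decomposition in dimension two). Since every matrix involved has determinant one,
`cp * cm = det C`.
-/

open Matrix Real

theorem fromBlocks_diagonal_mul_fromBlocks_mul_transpose {l m α : Type*} [Fintype l] [Fintype m]
    [CommRing α] (P : Matrix l l α) (Q : Matrix m m α) (A : Matrix l l α) (B : Matrix m m α)
    (C : Matrix l m α) :
    fromBlocks P 0 0 Q * fromBlocks A C Cᵀ B * (fromBlocks P 0 0 Q)ᵀ =
      fromBlocks (P * A * Pᵀ) (P * C * Qᵀ) (P * C * Qᵀ)ᵀ (Q * B * Qᵀ) := by
  simp [fromBlocks_transpose, fromBlocks_multiply, transpose_mul, Matrix.mul_assoc]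

theorem mul_mul_mul_transpose {l m α : Type*} [Fintype l] [Fintype m] [CommRing α]
    (U S : Matrix l l α) (C : Matrix l m α) (V T : Matrix m m α) :
    U * S * C * (V * T)ᵀ = U * (S * C * Tᵀ) * Vᵀ := by
  simp only [transpose_mul, Matrix.mul_assoc]

theorem lowerTriangular_congr_eq_smul_one {R : Type*} [CommRing R] (A : Matrix (Fin 2) (Fin 2) R)
    (hA : A 1 0 = A 0 1) {a : R} (ha : a ^ 2 = A.det) :
    !![a, 0; -A 0 1, A 0 0] * A * !![a, 0; -A 0 1, A 0 0]ᵀ = (A 0 0 * a ^ 2) • 1 := by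
  rw [det_fin_two, hA] at ha
  rw [eta_fin_two A, hA]
  ext i j
  fin_cases i <;> fin_cases j <;>
    simp only [mul_apply, transpose_apply, Fin.sum_univ_two, of_apply, cons_val', cons_val_zero,
      cons_val_one, cons_val_fin_one, Fin.zero_eta, Fin.mk_one, Matrix.smul_apply, smul_eq_mul,
      one_apply_eq, one_apply_ne zero_ne_one, one_apply_ne one_ne_zero]
  · ring
  · ring
  · ring
  · linear_combination (-A 0 0) * ha

theorem Matrix.PosDef.exists_det_eq_one_congr_eq_sqrt_det_smul_one
    {A : Matrix (Fin 2) (Fin 2) ℝ} (hA : A.PosDef) :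
    ∃ S : Matrix (Fin 2) (Fin 2) ℝ, S.det = 1 ∧ S * A * Sᵀ = √A.det • 1 := by
  set a := √A.det
  set k := √(A 0 0 * a)
  have hp : 0 < A 0 0 := hA.diag_pos
  have ha : 0 < a := sqrt_pos.mpr hA.det_pos
  have ha2 : a ^ 2 = A.det := sq_sqrt hA.det_pos.le
  have hsym : A 1 0 = A 0 1 := by simpa using hA.isHermitian.apply 0 1
  have hk : k ^ 2 = A 0 0 * a := sq_sqrt (by positivity)
  have hk0 : k ≠ 0 := by positivity
  refine ⟨k⁻¹ • !![a, 0; -A 0 1, A 0 0], ?_, ?_⟩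
  · rw [det_smul, det_fin_two_of, Fintype.card_fin]
    field_simp
    linear_combination -hk
  · simp only [transpose_smul, Matrix.smul_mul, Matrix.mul_smul, smul_smul,
      lowerTriangular_congr_eq_smul_one A hsym ha2]
    congr 1
    field_simp
    exact hk.symm

noncomputable def rotationMatrix (θ : ℝ) : Matrix (Fin 2) (Fin 2) ℝ :=
  !![cos θ, -sin θ; sin θ, cos θ]

theorem det_rotationMatrix (θ : ℝ) : (rotationMatrix θ).det = 1 := by
  simp [rotationMatrix, det_fin_two_of, ← sq]

theorem rotationMatrix_mul_transpose (θ : ℝ) : rotationMatrix θ * (rotationMatrix θ)ᵀ = 1 := by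
  ext i j
  fin_cases i <;> fin_cases j <;> simp [rotationMatrix, mul_apply, Fin.sum_univ_two, mul_comm, ← sq]

theorem rotationMatrix_mul_smul_one_mul_transpose (θ a : ℝ) :
    rotationMatrix θ * (a • 1) * (rotationMatrix θ)ᵀ = a • 1 := by
  rw [Matrix.mul_smul, Matrix.mul_one, Matrix.smul_mul, rotationMatrix_mul_transpose]

theorem exists_mul_cos_add_mul_sin_eq_zero (x y : ℝ) : ∃ θ, x * cos θ + y * sin θ = 0 := by
  set z : ℂ := ⟨y, -x⟩
  refine ⟨z.arg, ?_⟩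
  rcases eq_or_ne z 0 with hz | hz
  · obtain ⟨rfl, hx⟩ : y = 0 ∧ -x = 0 := Complex.ext_iff.mp hz
    simp [neg_eq_zero.mp hx]
  · have hcos : ‖z‖ * cos z.arg = y := Complex.norm_mul_cos_arg z
    have hsin : ‖z‖ * sin z.arg = -x := Complex.norm_mul_sin_arg z
    have : ‖z‖ * (x * cos z.arg + y * sin z.arg) = 0 := by
      linear_combination x * hcos + y * hsin
    simpa [hz] using this

section RotationCongr

variable (M : Matrix (Fin 2) (Fin 2) ℝ) (u v : ℝ)

theorem rotationMatrix_mul_mul_transpose_apply_zero_one :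
    (rotationMatrix u * M * (rotationMatrix v)ᵀ) 0 1 =
      ((M 0 1 - M 1 0) * cos (u - v) - (M 0 0 + M 1 1) * sin (u - v)
        + ((M 0 1 + M 1 0) * cos (u + v) + (M 0 0 - M 1 1) * sin (u + v))) / 2 := by
  simp only [rotationMatrix, mul_apply, transpose_apply, Fin.sum_univ_two, of_apply, cons_val',
    cons_val_zero, cons_val_one, cons_val_fin_one, cos_add, cos_sub, sin_add, sin_sub]
  ring

theorem rotationMatrix_mul_mul_transpose_apply_one_zero :
    (rotationMatrix u * M * (rotationMatrix v)ᵀ) 1 0 =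
      ((M 0 1 + M 1 0) * cos (u + v) + (M 0 0 - M 1 1) * sin (u + v)
        - ((M 0 1 - M 1 0) * cos (u - v) - (M 0 0 + M 1 1) * sin (u - v))) / 2 := by
  simp only [rotationMatrix, mul_apply, transpose_apply, Fin.sum_univ_two, of_apply, cons_val',
    cons_val_zero, cons_val_one, cons_val_fin_one, cos_add, cos_sub, sin_add, sin_sub]
  ring

end RotationCongr

/-- The off-diagonal entries depend on `u - v` and `u + v` through independent terms, so choosing
`u - v = θ` and `u + v = φ` to annihilate each term separately makes both vanish. -/
theorem exists_rotationMatrix_mul_mul_transpose_eq_diagonal (M : Matrix (Fin 2) (Fin 2) ℝ) :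
    ∃ u v cp cm : ℝ, rotationMatrix u * M * (rotationMatrix v)ᵀ = !![cp, 0; 0, cm] := by
  obtain ⟨θ, hθ⟩ := exists_mul_cos_add_mul_sin_eq_zero (M 0 1 - M 1 0) (-(M 0 0 + M 1 1))
  obtain ⟨φ, hφ⟩ := exists_mul_cos_add_mul_sin_eq_zero (M 0 1 + M 1 0) (M 0 0 - M 1 1)
  have hsub : (θ + φ) / 2 - (φ - θ) / 2 = θ := by ring
  have hadd : (θ + φ) / 2 + (φ - θ) / 2 = φ := by ring
  set N := rotationMatrix ((θ + φ) / 2) * M * (rotationMatrix ((φ - θ) / 2))ᵀ with hN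
  refine ⟨(θ + φ) / 2, (φ - θ) / 2, N 0 0, N 1 1, ?_⟩
  have h01 : N 0 1 = 0 := by
    rw [hN, rotationMatrix_mul_mul_transpose_apply_zero_one, hsub, hadd]
    linear_combination (hθ + hφ) / 2
  have h10 : N 1 0 = 0 := by
    rw [hN, rotationMatrix_mul_mul_transpose_apply_one_zero, hsub, hadd]
    linear_combination (hφ - hθ) / 2
  exact (eta_fin_two N).trans (by rw [h01, h10])

theorem standard_form_reduction_general (A B C : Matrix (Fin 2) (Fin 2) ℝ)
    (hApos : A.PosDef) (hBpos : B.PosDef) :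
    ∃ (SA SB : Matrix (Fin 2) (Fin 2) ℝ) (a b cp cm : ℝ),
      SA.det = 1 ∧ SB.det = 1 ∧
      (Matrix.fromBlocks SA 0 0 SB) * (Matrix.fromBlocks A C Cᵀ B) *
          (Matrix.fromBlocks SA 0 0 SB)ᵀ
        = Matrix.fromBlocks (a • (1 : Matrix (Fin 2) (Fin 2) ℝ)) (!![cp, 0; 0, cm])
            (!![cp, 0; 0, cm])ᵀ (b • (1 : Matrix (Fin 2) (Fin 2) ℝ)) ∧
      a ^ 2 = A.det ∧ b ^ 2 = B.det ∧ cp * cm = C.det := by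
  obtain ⟨SA, hSA_det, hSA⟩ := hApos.exists_det_eq_one_congr_eq_sqrt_det_smul_one
  obtain ⟨SB, hSB_det, hSB⟩ := hBpos.exists_det_eq_one_congr_eq_sqrt_det_smul_one
  obtain ⟨u, v, cp, cm, hC⟩ := exists_rotationMatrix_mul_mul_transpose_eq_diagonal (SA * C * SBᵀ)
  refine ⟨rotationMatrix u * SA, rotationMatrix v * SB, √A.det, √B.det, cp, cm,
    by simp [hSA_det, det_rotationMatrix], by simp [hSB_det, det_rotationMatrix], ?_,
    sq_sqrt hApos.det_pos.le, sq_sqrt hBpos.det_pos.le, ?_⟩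
  · rw [fromBlocks_diagonal_mul_fromBlocks_mul_transpose, mul_mul_mul_transpose,
      mul_mul_mul_transpose, mul_mul_mul_transpose, hSA, hSB, hC,
      rotationMatrix_mul_smul_one_mul_transpose, rotationMatrix_mul_smul_one_mul_transpose]
  · simpa [hSA_det, hSB_det, det_rotationMatrix] using (congr_arg det hC).symm

/-- Reduction of a two-mode correlation matrix to standard form by local symplectic
(SL(2,ℝ)) transformations. -/
theorem standard_form_reduction (A B C : Matrix (Fin 2) (Fin 2) ℝ)
    (hA : Aᵀ = A) (hB : Bᵀ = B) (hApos : A.PosDef) (hBpos : B.PosDef) :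
    ∃ (SA SB : Matrix (Fin 2) (Fin 2) ℝ) (a b cp cm : ℝ),
      SA.det = 1 ∧ SB.det = 1 ∧
      (Matrix.fromBlocks SA 0 0 SB) * (Matrix.fromBlocks A C Cᵀ B) *
          (Matrix.fromBlocks SA 0 0 SB)ᵀ
        = Matrix.fromBlocks (a • (1 : Matrix (Fin 2) (Fin 2) ℝ)) (!![cp, 0; 0, cm])
            (!![cp, 0; 0, cm])ᵀ (b • (1 : Matrix (Fin 2) (Fin 2) ℝ)) ∧
      a ^ 2 = A.det ∧ b ^ 2 = B.det ∧ cp * cm = C.det :=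
  standard_form_reduction_general A B C hApos hBpos
end

section
/- Let V^I be the 4×4 standard-form matrix with parameters a,b,c₊,c₋ and Ω the two-mode symplectic form. The four eigenvalues of the Hermitian matrix V^I + iΩ are 2λ±^+ = a+b+√(μ ± 2√ν) and 2λ±^- = a+b−√(μ ± 2√ν), where μ = 4 + (a−b)² + 2(c₊² + c₋²) and ν = 4(a−b)² + (c₊+c₋)²[4 + (c₊−c₋)²]. -/
open Matrix Polynomial

def Omega4 : Matrix (Fin 4) (Fin 4) ℝ :=
  !![0, 1, 0, 0; -1, 0, 0, 0; 0, 0, 0, 1; 0, 0, -1, 0]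

/-!
The characteristic polynomial of `V^I + iΩ` is a biquadratic in `Y = X - (a + b)/2`, namely
`Y⁴ - (μ/2) Y² + (μ² - 4ν)/16`, so `Y² = (μ ± 2√ν)/4`. Both values are real and nonnegative
because `μ² - 4ν = ((a - b)² + 4c₊c₋ - 4)² + 4((a - b)(c₊ - c₋))²`, which gives the four real
roots `Y = ±√(μ ± 2√ν)/2`.
-/

section Biquadratic

variable {K : Type*} [Field K] [CharZero K]

noncomputable def shiftedBiquadratic (s μ ν : K) : K[X] :=
  (X - C (s / 2)) ^ 4 - C (μ / 2) * (X - C (s / 2)) ^ 2 + C ((μ ^ 2 - 4 * ν) / 16)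

theorem X_sub_C_half_add_mul_X_sub_C_half_sub (s r : K) :
    (X - C ((s + r) / 2)) * (X - C ((s - r) / 2)) = (X - C (s / 2)) ^ 2 - C (r ^ 2 / 4) := by
  rw [add_div, sub_div, show r ^ 2 / 4 = (r / 2) ^ 2 by ring, C_add, C_sub, C_pow]
  ring

theorem shiftedBiquadratic_eq_prod {s μ ν D r₁ r₂ : K} (hD : D ^ 2 = ν)
    (h₁ : r₁ ^ 2 = μ + 2 * D) (h₂ : r₂ ^ 2 = μ - 2 * D) :
    shiftedBiquadratic s μ ν = (X - C ((s + r₁) / 2)) * (X - C ((s + r₂) / 2)) *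
      (X - C ((s - r₁) / 2)) * (X - C ((s - r₂) / 2)) := by
  calc shiftedBiquadratic s μ ν
      = ((X - C (s / 2)) ^ 2 - C (r₁ ^ 2 / 4)) * ((X - C (s / 2)) ^ 2 - C (r₂ ^ 2 / 4)) := by
        rw [shiftedBiquadratic, h₁, h₂, ← hD,
          show (μ + 2 * D) / 4 = μ / 4 + D / 2 by ring,
          show (μ - 2 * D) / 4 = μ / 4 - D / 2 by ring,
          show μ / 2 = μ / 4 + μ / 4 by ring,
          show (μ ^ 2 - 4 * D ^ 2) / 16 = (μ / 4) ^ 2 - (D / 2) ^ 2 by ring]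
        simp only [C_add, C_sub, C_pow]
        ring
    _ = _ := by
        rw [← X_sub_C_half_add_mul_X_sub_C_half_sub, ← X_sub_C_half_add_mul_X_sub_C_half_sub]
        ring

end Biquadratic

section StandardForm

variable (a b cp cm : ℝ)

def standardForm : Matrix (Fin 4) (Fin 4) ℝ :=
  !![a, 0, cp, 0; 0, a, 0, cm; cp, 0, b, 0; 0, cm, 0, b]

def standardFormMu : ℝ := 4 + (a - b) ^ 2 + 2 * (cp ^ 2 + cm ^ 2)

def standardFormNu : ℝ := 4 * (a - b) ^ 2 + (cp + cm) ^ 2 * (4 + (cp - cm) ^ 2)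

theorem standardFormNu_nonneg : 0 ≤ standardFormNu a b cp cm := by
  unfold standardFormNu; positivity

theorem standardFormMu_sq_sub_four_mul_standardFormNu :
    standardFormMu a b cp cm ^ 2 - 4 * standardFormNu a b cp cm =
      ((a - b) ^ 2 + 4 * cp * cm - 4) ^ 2 + 4 * ((a - b) * (cp - cm)) ^ 2 := by
  unfold standardFormMu standardFormNu; ring

theorem two_mul_sqrt_standardFormNu_le_standardFormMu :
    2 * √(standardFormNu a b cp cm) ≤ standardFormMu a b cp cm := by
  have hμ : 0 ≤ standardFormMu a b cp cm := by unfold standardFormMu; positivity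
  have hdisc : 0 ≤ standardFormMu a b cp cm ^ 2 - 4 * standardFormNu a b cp cm := by
    rw [standardFormMu_sq_sub_four_mul_standardFormNu]; positivity
  rw [← le_div_iff₀' two_pos, Real.sqrt_le_left (by positivity)]
  nlinarith

theorem charpoly_standardForm_add_I_smul_Omega4 :
    (cplx (standardForm a b cp cm) + Complex.I • cplx Omega4).charpoly =
      (shiftedBiquadratic (a + b) (standardFormMu a b cp cm) (standardFormNu a b cp cm)).map
        (algebraMap ℝ ℂ) := by
  have hM : cplx (standardForm a b cp cm) + Complex.I • cplx Omega4 =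
      !![(a : ℂ), Complex.I, cp, 0; -Complex.I, a, 0, cm;
        cp, 0, b, Complex.I; 0, cm, -Complex.I, b] := by
    ext i j
    fin_cases i <;> fin_cases j <;> simp [cplx, standardForm, Omega4]
  refine Polynomial.funext fun x => ?_
  rw [eval_charpoly, hM]
  simp only [scalar_apply, det_succ_row_zero, Fin.isValue, Matrix.sub_apply, of_apply, cons_val',
    cons_val_fin_one, cons_val_zero, submatrix_apply, Fin.succ_zero_eq_one, Fin.succAbove,
    cons_val_one, submatrix_submatrix, Function.comp_apply, Fin.succ_one_eq_two, cons_val,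
    det_unique, Fin.default_eq_zero, Fin.reduceSucc, Fin.castSucc_zero, Fin.sum_univ_succ,
    Fin.coe_ofNat_eq_mod, lt_self_iff_false, ↓reduceIte, Fin.castSucc_one, Finset.univ_unique,
    Fin.val_succ, Fin.val_eq_zero, Fin.castSucc_succ, Fin.succ_pos, Finset.sum_singleton,
    not_lt_zero, Fin.reduceCastSucc, Fin.reduceLT, diagonal_apply_eq, ne_eq, Fin.reduceEq,
    not_false_eq_true, diagonal_apply_ne, cons_val_succ, one_ne_zero, zero_ne_one, Fin.lt_one_iff,
    shiftedBiquadratic, standardFormMu, standardFormNu, Polynomial.map_add, Polynomial.map_sub,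
    Polynomial.map_pow, Polynomial.map_mul, map_X, map_C, map_div₀, Complex.coe_algebraMap,
    Complex.ofReal_add, Complex.ofReal_ofNat, Complex.ofReal_pow, Complex.ofReal_sub,
    Complex.ofReal_mul, eval_add, eval_sub, eval_pow, eval_X, eval_C, eval_mul]
  linear_combination ((x - a) ^ 2 + (x - b) ^ 2 + 2 * cp * cm + Complex.I ^ 2 - 1) * Complex.I_sq

end StandardForm

/-- The four eigenvalues of V^I + iΩ are (a+b ± √(μ ± 2√ν))/2, expressed through the
characteristic polynomial. -/
theorem eigenvalues_standard_form (a b cp cm : ℝ) :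
    let VI : Matrix (Fin 4) (Fin 4) ℝ :=
      !![a, 0, cp, 0; 0, a, 0, cm; cp, 0, b, 0; 0, cm, 0, b]
    let μ : ℝ := 4 + (a - b) ^ 2 + 2 * (cp ^ 2 + cm ^ 2)
    let ν : ℝ := 4 * (a - b) ^ 2 + (cp + cm) ^ 2 * (4 + (cp - cm) ^ 2)
    let lpp : ℝ := (a + b + Real.sqrt (μ + 2 * Real.sqrt ν)) / 2
    let lmp : ℝ := (a + b + Real.sqrt (μ - 2 * Real.sqrt ν)) / 2
    let lpm : ℝ := (a + b - Real.sqrt (μ + 2 * Real.sqrt ν)) / 2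
    let lmm : ℝ := (a + b - Real.sqrt (μ - 2 * Real.sqrt ν)) / 2
    (cplx VI + Complex.I • cplx Omega4).charpoly
      = (X - C (lpp : ℂ)) * (X - C (lmp : ℂ)) * (X - C (lpm : ℂ)) * (X - C (lmm : ℂ)) := by
  intro VI μ ν lpp lmp lpm lmm
  have hν : 0 ≤ ν := standardFormNu_nonneg a b cp cm
  have h2ν : 2 * √ν ≤ μ := two_mul_sqrt_standardFormNu_le_standardFormMu a b cp cm
  have hfactor :
      shiftedBiquadratic (a + b) μ ν = (X - C lpp) * (X - C lmp) * (X - C lpm) * (X - C lmm) :=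
    shiftedBiquadratic_eq_prod (Real.sq_sqrt hν) (Real.sq_sqrt (by positivity))
      (Real.sq_sqrt (by linarith))
  calc (cplx VI + Complex.I • cplx Omega4).charpoly
      = (shiftedBiquadratic (a + b) μ ν).map (algebraMap ℝ ℂ) :=
        charpoly_standardForm_add_I_smul_Omega4 a b cp cm
    _ = _ := by
        simp only [hfactor, Polynomial.map_mul, Polynomial.map_sub, map_X, map_C,
          Complex.coe_algebraMap]
end

section
/- Let V^I be the 4×4 standard-form matrix with a > 0, b > 0 and off-diagonal entries c₊, c₋. Then V^I + iΩ ≥ 0 if and only if both (i) a² + b² + 2c₊c₋ ≤ (ab − c₊²)(ab − c₋²) + 1 and (ii) 2ab − c₊² − c₋² ≥ 2 hold. -/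
/-!
Grouping the coordinates as positions `(x₁, x₂)` and momenta `(p₁, p₂)` turns `V + iΩ`
into the block matrix `[[P, i], [-i, Q]]` with `P = [[a, c₊], [c₊, b]]`, `Q = [[a, c₋], [c₋, b]]`.
If it is positive semidefinite, `P` is positive definite: a kernel vector `u` of `P` would give
`(u, 0)` in the kernel of the whole matrix, yet the matrix maps it to `(0, -i u)`.
By the Schur complement the matrix is then positive semidefinite iff the `2 × 2` matrix
`Q - P⁻¹` is, i.e. iff its trace and determinant are nonnegative; these say `det P ≥ 1` and
condition (i).
Finally (i) reads `(det P - 1)(det Q - 1) ≥ (a - b)² + (c₊ + c₋)²`, and under it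
`det P ≥ 1` is equivalent to (ii), `det P + det Q ≥ 2`.
-/

open Matrix
open scoped ComplexOrder

namespace Matrix

variable {𝕜 : Type*} [RCLike 𝕜]

theorem IsHermitian.posSemidef_iff_trace_nonneg_and_det_nonneg {A : Matrix (Fin 2) (Fin 2) 𝕜}
    (hA : A.IsHermitian) : A.PosSemidef ↔ 0 ≤ A.trace ∧ 0 ≤ A.det := by
  rw [hA.posSemidef_iff_eigenvalues_nonneg, hA.trace_eq_sum_eigenvalues,
    hA.det_eq_prod_eigenvalues, Pi.le_def]
  simp only [Fin.sum_univ_two, Fin.prod_univ_two, Fin.forall_fin_two, Pi.zero_apply,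
    ← RCLike.ofReal_add, ← RCLike.ofReal_mul, RCLike.ofReal_nonneg]
  constructor
  · rintro ⟨h₀, h₁⟩
    exact ⟨add_nonneg h₀ h₁, mul_nonneg h₀ h₁⟩
  · rintro ⟨hsum, hprod⟩
    constructor <;> nlinarith

theorem PosSemidef.posDef_of_fromBlocks {m n : Type*} [Fintype m] [Fintype n] [DecidableEq m]
    {A : Matrix m m 𝕜} {B : Matrix m n 𝕜} {D : Matrix n n 𝕜}
    (h : (fromBlocks A B Bᴴ D).PosSemidef) (hB : Function.Injective Bᴴ.mulVec) : A.PosDef := by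
  have hA : A.PosSemidef := by
    convert h.submatrix Sum.inl
    ext; simp
  rw [hA.posDef_iff_isUnit, ← mulVec_injective_iff_isUnit]
  refine (injective_iff_map_eq_zero A.mulVecLin).2 fun x hx => hB ?_
  have hkernel :
      fromBlocks A B Bᴴ D *ᵥ Sum.elim x 0 = Sum.elim (0 : m → 𝕜) (Bᴴ *ᵥ x) := by
    simp_all [fromBlocks_mulVec]
  have := (h.dotProduct_mulVec_zero_iff (Sum.elim x 0)).1
    (by simp [hkernel, dotProduct, Fintype.sum_sum_type])
  rw [mulVec_zero]
  ext i
  simpa [hkernel] using congrFun this (Sum.inr i)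

end Matrix

theorem det_cplx_fin_two (x y w : ℝ) :
    (cplx !![x, w; w, y]).det = ((x * y - w ^ 2 : ℝ) : ℂ) := by
  simp [cplx, det_fin_two, sq]

theorem posSemidef_cplx_fin_two_iff (x y w : ℝ) :
    (cplx !![x, w; w, y]).PosSemidef ↔ 0 ≤ x + y ∧ w ^ 2 ≤ x * y := by
  have hherm : (cplx !![x, w; w, y]).IsHermitian := by
    ext i j
    fin_cases i <;> fin_cases j <;> simp [cplx]
  have htrace : (cplx !![x, w; w, y]).trace = ((x + y : ℝ) : ℂ) := by
    simp [cplx, trace_fin_two]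
  rw [hherm.posSemidef_iff_trace_nonneg_and_det_nonneg, htrace, det_cplx_fin_two,
    Complex.zero_le_real, Complex.zero_le_real, sub_nonneg]

def positionMomentumEquiv : Fin 2 ⊕ Fin 2 ≃ Fin 4 where
  toFun := Sum.elim ![0, 2] ![1, 3]
  invFun := ![.inl 0, .inr 0, .inl 1, .inr 1]
  left_inv := by decide
  right_inv := by decide

theorem submatrix_positionMomentumEquiv (a b cp cm : ℝ) :
    (cplx !![a, 0, cp, 0; 0, a, 0, cm; cp, 0, b, 0; 0, cm, 0, b] +
        Complex.I • cplx Omega4).submatrix positionMomentumEquiv positionMomentumEquiv =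
      fromBlocks (cplx !![a, cp; cp, b]) (Complex.I • 1) (Complex.I • 1)ᴴ
        (cplx !![a, cm; cm, b]) := by
  ext (i | i) (j | j) <;> fin_cases i <;> fin_cases j <;>
    simp [cplx, Omega4, positionMomentumEquiv]

theorem schurComplement_positionBlock_eq (a b cp cm : ℝ) :
    cplx !![a, cm; cm, b] - (Complex.I • (1 : Matrix (Fin 2) (Fin 2) ℂ))ᴴ *
        (cplx !![a, cp; cp, b])⁻¹ * (Complex.I • 1) =
      cplx !![a - b / (a * b - cp ^ 2), cm + cp / (a * b - cp ^ 2);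
        cm + cp / (a * b - cp ^ 2), b - a / (a * b - cp ^ 2)] := by
  rw [inv_def, adjugate_fin_two, det_cplx_fin_two]
  ext i j
  fin_cases i <;> fin_cases j <;> simp [cplx] <;> rw [← mul_assoc, Complex.I_mul_I] <;> ring

section StandardForm

variable {a b cp cm : ℝ}

theorem posSemidef_fromBlocks_iff_of_pos (ha : 0 < a) (hb : 0 < b) (hp : 0 < a * b - cp ^ 2) :
    (fromBlocks (cplx !![a, cp; cp, b]) (Complex.I • 1) (Complex.I • 1)ᴴ
        (cplx !![a, cm; cm, b])).PosSemidef ↔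
      1 ≤ a * b - cp ^ 2 ∧
        a ^ 2 + b ^ 2 + 2 * cp * cm ≤ (a * b - cp ^ 2) * (a * b - cm ^ 2) + 1 := by
  have hP : (cplx !![a, cp; cp, b]).PosDef := by
    have hPsd := (posSemidef_cplx_fin_two_iff a b cp).2 ⟨by positivity, by linarith⟩
    rw [hPsd.posDef_iff_det_ne_zero, det_cplx_fin_two]
    exact_mod_cast hp.ne'
  have := hP.isUnit.invertible
  rw [hP.fromBlocks₁₁, schurComplement_positionBlock_eq, posSemidef_cplx_fin_two_iff]
  have htrace : a - b / (a * b - cp ^ 2) + (b - a / (a * b - cp ^ 2)) =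
      (a + b) * (a * b - cp ^ 2 - 1) / (a * b - cp ^ 2) := by
    field_simp; ring
  have hdet : (a - b / (a * b - cp ^ 2)) * (b - a / (a * b - cp ^ 2)) -
      (cm + cp / (a * b - cp ^ 2)) ^ 2 =
      ((a * b - cp ^ 2) * (a * b - cm ^ 2) + 1 - (a ^ 2 + b ^ 2 + 2 * cp * cm)) /
        (a * b - cp ^ 2) := by
    field_simp; ring
  apply and_congr
  · rw [htrace, le_div_iff₀ hp, zero_mul, mul_nonneg_iff_of_pos_left (by positivity), sub_nonneg]
  · rw [← sub_nonneg, hdet, le_div_iff₀ hp, zero_mul, sub_nonneg]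

theorem sub_sq_add_add_sq_le_mul
    (h : a ^ 2 + b ^ 2 + 2 * cp * cm ≤ (a * b - cp ^ 2) * (a * b - cm ^ 2) + 1) :
    (a - b) ^ 2 + (cp + cm) ^ 2 ≤ (a * b - cp ^ 2 - 1) * (a * b - cm ^ 2 - 1) := by
  linarith

theorem one_le_mul_sub_sq
    (h₁ : a ^ 2 + b ^ 2 + 2 * cp * cm ≤ (a * b - cp ^ 2) * (a * b - cm ^ 2) + 1)
    (h₂ : 2 ≤ 2 * a * b - cp ^ 2 - cm ^ 2) : 1 ≤ a * b - cp ^ 2 := by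
  nlinarith [sub_sq_add_add_sq_le_mul h₁, sq_nonneg (a - b), sq_nonneg (cp + cm)]

theorem two_le_two_mul_sub_sq_sub_sq
    (h₁ : a ^ 2 + b ^ 2 + 2 * cp * cm ≤ (a * b - cp ^ 2) * (a * b - cm ^ 2) + 1)
    (hp : 1 ≤ a * b - cp ^ 2) : 2 ≤ 2 * a * b - cp ^ 2 - cm ^ 2 := by
  by_contra! hlt
  have hcm : (cp + cm) ^ 2 ≤ 0 := by
    nlinarith [sub_sq_add_add_sq_le_mul h₁, sq_nonneg (a - b)]
  have : cm = -cp := by nlinarith [sq_nonneg (cp + cm)]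
  subst this
  linarith

end StandardForm

/-- For the standard-form matrix V^I with a, b > 0: V^I + iΩ ≥ 0 iff
a² + b² + 2c₊c₋ ≤ (ab − c₊²)(ab − c₋²) + 1 and 2ab − c₊² − c₋² ≥ 2. -/
theorem standard_form_uncertainty_iff (a b cp cm : ℝ) (ha : 0 < a) (hb : 0 < b) :
    (cplx (!![a, 0, cp, 0; 0, a, 0, cm; cp, 0, b, 0; 0, cm, 0, b])
        + Complex.I • cplx Omega4).PosSemidef
      ↔ (a ^ 2 + b ^ 2 + 2 * cp * cm ≤ (a * b - cp ^ 2) * (a * b - cm ^ 2) + 1 ∧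
         2 ≤ 2 * a * b - cp ^ 2 - cm ^ 2) := by
  rw [← posSemidef_submatrix_equiv positionMomentumEquiv, submatrix_positionMomentumEquiv]
  constructor
  · intro h
    have hP := h.posDef_of_fromBlocks <| by
      simp [mulVec_injective_iff_isUnit, isUnit_iff_isUnit_det]
    have hp : 0 < a * b - cp ^ 2 := by
      simpa only [det_cplx_fin_two, Complex.zero_lt_real] using hP.det_pos
    obtain ⟨hp₁, h₁⟩ := (posSemidef_fromBlocks_iff_of_pos ha hb hp).1 h
    exact ⟨h₁, two_le_two_mul_sub_sq_sub_sq h₁ hp₁⟩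
  · rintro ⟨h₁, h₂⟩
    have hp := one_le_mul_sub_sq h₁ h₂
    exact (posSemidef_fromBlocks_iff_of_pos ha hb (by linarith)).2 ⟨hp, h₁⟩
end
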